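/- arXiv:2008.04996 — 2 statements merged into one kernel-verified Lean document; each statement's English description precedes it below -/
import Mathlib

section
/- Every perfect tree T ⊆ 2^{<ω} contains a good perfect subtree T' ⊆ T, where a perfect tree is good iff for any two splitting nodes s, t, if s precedes t in the canonical depth-lexicographic ordering of splitting nodes then |s| ≤ |t|. -/
/-- A tree in `2^{<ω}`: a set of finite binary sequences closed under initial segments. -/
def IsTree (T : Set (List Bool)) : Prop :=
  ∀ s t : List Bool, t ∈ T → s <+: t → s ∈ T

/-- `t` is a splitting node of `T`. -/
def splitNode (T : Set (List Bool)) (t : List Bool) : Prop :=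
  t ∈ T ∧ t ++ [false] ∈ T ∧ t ++ [true] ∈ T

/-- A perfect (Sacks) tree: nonempty tree in which every node extends to a splitting node. -/
def PerfectTree (T : Set (List Bool)) : Prop :=
  T.Nonempty ∧ IsTree T ∧ ∀ t ∈ T, ∃ s, t <+: s ∧ splitNode T s

/-- A Silver (uniform) tree. -/
def SilverTree (T : Set (List Bool)) : Prop :=
  PerfectTree T ∧ ∀ s ∈ T, ∀ t ∈ T, s.length = t.length →
    ∀ i : Bool, (s ++ [i] ∈ T ↔ t ++ [i] ∈ T)

/-- The first `n` values of `x : 2^ω` as a finite sequence. -/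
def seqTake (x : ℕ → Bool) (n : ℕ) : List Bool := List.ofFn (fun i : Fin n => x i)

/-- The body `[T]` of a tree: the set of its infinite branches. -/
def body (T : Set (List Bool)) : Set (ℕ → Bool) := {x | ∀ n, seqTake x n ∈ T}

/-- Two finite sequences are comparable (compatible). -/
def comparable (s t : List Bool) : Prop := s <+: t ∨ t <+: s

/-- Terminal nodes of a (finite) tree: nodes with no proper extension in the tree. -/
def Term (p : Set (List Bool)) : Set (List Bool) := {s ∈ p | ∀ t ∈ p, s <+: t → s = t}

/-- The restriction `T|n = {t ∈ T : |t| ≤ n}`. -/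
def restrict (T : Set (List Bool)) (n : ℕ) : Set (List Bool) := {t ∈ T | t.length ≤ n}


open Classical in
/-- The trace of a node `s` along the splitting nodes of `T` strictly below it:
the values of `s` at the splitting positions. Under the canonical isomorphism
`e : Split(T) → 2^{<ω}`, this is `e(s)` for splitting nodes `s`. -/
noncomputable def splitTrace (T : Set (List Bool)) (s : List Bool) : List Bool :=
  ((List.range s.length).filter (fun k => decide (splitNode T (s.take k)))).map
    (fun k => s.getD k false)

/-- Lexicographic order on `2^{<ω}` (with `false < true`). -/
def lexLe (a b : List Bool) : Prop := a = b ∨ List.Lex (· < ·) a b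

/-- The canonical depth-lexicographic order `s ≼ t` on splitting nodes:
`|e(s)| < |e(t)|`, or `|e(s)| = |e(t)|` and `e(s) ≤_lex e(t)`. -/
noncomputable def preceq (T : Set (List Bool)) (s t : List Bool) : Prop :=
  (splitTrace T s).length < (splitTrace T t).length ∨
    ((splitTrace T s).length = (splitTrace T t).length ∧
      lexLe (splitTrace T s) (splitTrace T t))

/-- A tree is good iff the depth-lexicographic order on its splitting nodes
respects lengths. -/
noncomputable def GoodTree (T : Set (List Bool)) : Prop :=
  ∀ s t : List Bool, splitNode T s → splitNode T t → preceq T s t → s.length ≤ t.length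

/-!
Fusion along the depth-lexicographic enumeration of `2^{<ω}`. Enumerate `2^{<ω}` as
`σ₀ = [], σ₁, σ₂, …` in the order `≼` (here `σₙ = heapNode n`: the binary expansion of `n + 1`
without its leading `1`) and choose splitting nodes `F n` of `T` such that `F n ++ [b]` is extended
by the node chosen for `σₙ ++ [b]`, and `F n` is strictly shorter than `F (n + 1)`. The downward
closure `T'` of the `F n` is perfect, its splitting nodes are exactly the `F n`, and
`e(F n) = σₙ`. Hence `≼` on `Split(T')` is the order of the indices `n`, along which the lengths
of the `F n` increase.
-/

namespace List

variable {α : Type*}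

theorem eq_of_concat_prefix_of_concat_prefix {w t : List α} {x y : α}
    (hx : w ++ [x] <+: t) (hy : w ++ [y] <+: t) : x = y := by
  simpa using (prefix_of_prefix_length_le hx hy (by simp)).eq_of_length (by simp)

theorem exists_concat_prefix_of_not_prefix {a b : List α} (hab : ¬a <+: b) (hba : ¬b <+: a) :
    ∃ w x y, x ≠ y ∧ w ++ [x] <+: a ∧ w ++ [y] <+: b := by
  induction a generalizing b with
  | nil => exact absurd nil_prefix hab
  | cons x a ih =>
    cases b with
    | nil => exact absurd nil_prefix hba
    | cons y b =>
      by_cases hxy : x = y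
      · subst hxy
        obtain ⟨w, x', y', hne, hx, hy⟩ :=
          ih (fun h => hab (cons_prefix_cons.mpr ⟨rfl, h⟩))
            (fun h => hba (cons_prefix_cons.mpr ⟨rfl, h⟩))
        exact ⟨x :: w, x', y', hne, by simpa using hx, by simpa using hy⟩
      · exact ⟨[], x, y, hxy, by simp, by simp⟩

/-- Two lists branch off at most once. -/
theorem eq_of_branch_of_branch {a b u v : List α} {x y x' y' : α} (hxy : x ≠ y) (hxy' : x' ≠ y')
    (hua : u ++ [x] <+: a) (hub : u ++ [y] <+: b) (hva : v ++ [x'] <+: a)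
    (hvb : v ++ [y'] <+: b) : u = v := by
  wlog hle : u.length ≤ v.length generalizing u v x y x' y'
  · exact (this hxy' hxy hva hvb hua hub (by omega)).symm
  have hva₀ := (prefix_append v [x']).trans hva
  rcases hle.lt_or_eq with hlt | hlen
  · exact absurd (eq_of_concat_prefix_of_concat_prefix
      (prefix_of_prefix_length_le hua hva₀ (by simpa using hlt))
      (prefix_of_prefix_length_le hub ((prefix_append v [y']).trans hvb) (by simpa using hlt))) hxy
  · exact (prefix_of_prefix_length_le ((prefix_append u [x]).trans hua) hva₀ hle).eq_of_length hlen

theorem Lex.append_of_length_eq {r : α → α → Prop} {a b : List α} (h : Lex r a b)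
    (hab : a.length = b.length) (c d : List α) : Lex r (a ++ c) (b ++ d) := by
  induction h with
  | nil => simp at hab
  | cons _ ih => exact Lex.cons (ih (by simpa using hab))
  | rel h => exact Lex.rel h

end List

section splitTrace

variable {T : Set (List Bool)}

@[simp]
theorem splitTrace_nil : splitTrace T [] = [] := rfl

open Classical in
theorem splitTrace_concat (s : List Bool) (b : Bool) :
    splitTrace T (s ++ [b]) = splitTrace T s ++ if splitNode T s then [b] else [] := by
  have htake : ∀ k ∈ List.range s.length, ((s ++ [b]).take k) = s.take k := fun k hk =>
    List.take_append_of_le_length (List.mem_range.mp hk).le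
  have hget : ∀ k ∈ (List.range s.length).filter (fun k => decide (splitNode T (s.take k))),
      (s ++ [b]).getD k false = s.getD k false := fun k hk =>
    List.getD_append _ _ _ _ (List.mem_range.mp (List.mem_filter.mp hk).1)
  unfold splitTrace
  rw [List.length_append, List.length_singleton, List.range_succ, List.filter_append,
    List.filter_congr (fun k hk => by rw [htake k hk]), List.map_append, List.map_congr_left hget]
  by_cases hs : splitNode T s <;> simp [hs]

theorem splitTrace_eq_of_prefix {s t : List Bool} (hst : s <+: t)
    (h : ∀ u, s <+: u → u <+: t → u ≠ t → ¬splitNode T u) : splitTrace T t = splitTrace T s := by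
  induction t using List.reverseRecOn with
  | nil => rw [List.prefix_nil.mp hst]
  | append_singleton t b ih =>
    rcases List.prefix_concat_iff.mp hst with rfl | hst
    · rfl
    have ht : t <+: t ++ [b] := List.prefix_append t [b]
    have hne : t ≠ t ++ [b] := by simp
    rw [splitTrace_concat, if_neg (h t hst ht hne), List.append_nil]
    exact ih hst fun u hsu hut _ => h u hsu (hut.trans ht) fun e => by
      simpa [e] using hut.length_le

end splitTrace

theorem splitNode.concat_mem {T : Set (List Bool)} {s : List Bool} (h : splitNode T s) (b : Bool) :
    s ++ [b] ∈ T := by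
  cases b
  exacts [h.2.1, h.2.2]

namespace PerfectTree

variable {T : Set (List Bool)}

theorem nil_mem (hT : PerfectTree T) : [] ∈ T :=
  hT.2.1 [] _ hT.1.some_mem List.nil_prefix

theorem exists_splitNode_extension (hT : PerfectTree T) {t : List Bool} (ht : t ∈ T) (N : ℕ) :
    ∃ s, t <+: s ∧ N ≤ s.length ∧ splitNode T s := by
  induction N with
  | zero =>
    obtain ⟨s, hts, hs⟩ := hT.2.2 t ht
    exact ⟨s, hts, Nat.zero_le _, hs⟩
  | succ N ih =>
    obtain ⟨s, hts, hN, hs⟩ := ih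
    obtain ⟨s', hss', hs'⟩ := hT.2.2 _ (hs.concat_mem false)
    refine ⟨s', hts.trans ((List.prefix_append s [false]).trans hss'), ?_, hs'⟩
    have := hss'.length_le
    simp only [List.length_append, List.length_singleton] at this
    omega

end PerfectTree

def heapNode : ℕ → List Bool
  | 0 => []
  | n + 1 => heapNode n.div2 ++ [n.bodd]
decreasing_by rw [Nat.div2_val]; omega

@[simp]
theorem heapNode_zero : heapNode 0 = [] := by
  rw [heapNode]

theorem heapNode_succ (n : ℕ) : heapNode (n + 1) = heapNode n.div2 ++ [n.bodd] := by
  rw [heapNode]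

@[simp]
theorem heapNode_bit_succ (b : Bool) (n : ℕ) : heapNode (Nat.bit b n + 1) = heapNode n ++ [b] := by
  rw [heapNode_succ, Nat.div2_bit, Nat.bodd_bit]

theorem heapNode_surjective : Function.Surjective heapNode := by
  intro w
  induction w using List.reverseRecOn with
  | nil => exact ⟨0, heapNode_zero⟩
  | append_singleton w b ih =>
    obtain ⟨n, rfl⟩ := ih
    exact ⟨Nat.bit b n + 1, heapNode_bit_succ b n⟩

theorem heapNode_depthLex_of_lt {m n : ℕ} (hmn : m < n) :
    (heapNode m).length < (heapNode n).length ∨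
      ((heapNode m).length = (heapNode n).length ∧ List.Lex (· < ·) (heapNode m) (heapNode n)) := by
  induction n using Nat.strong_induction_on generalizing m with
  | _ n ih =>
  obtain _ | k := n
  · omega
  obtain _ | j := m
  · simp [heapNode_succ]
  have hj := Nat.bodd_add_div2 j
  have hk := Nat.bodd_add_div2 k
  have := Bool.toNat_le j.bodd
  have := Bool.toNat_le k.bodd
  rw [heapNode_succ, heapNode_succ, List.length_append, List.length_append]
  rcases Nat.lt_or_eq_of_le (show j.div2 ≤ k.div2 by omega) with hlt | heq
  · rcases ih k.div2 (by omega) hlt with hlen | ⟨hlen, hlex⟩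
    · exact Or.inl (by simpa using hlen)
    · exact Or.inr ⟨by simp [hlen], hlex.append_of_length_eq hlen _ _⟩
  · have hbits : j.bodd = false ∧ k.bodd = true := by
      cases hjb : j.bodd <;> cases hkb : k.bodd <;>
        simp only [hjb, hkb, Bool.toNat_true, Bool.toNat_false] at hj hk <;> simp <;> omega
    rw [heq, hbits.1, hbits.2]
    exact Or.inr ⟨rfl, List.Lex.append_left _ (List.Lex.rel (by decide)) _⟩

theorem heapNode_ne_of_lt {m n : ℕ} (hmn : m < n) : heapNode m ≠ heapNode n := by
  intro h
  rcases heapNode_depthLex_of_lt hmn with hlen | ⟨-, hlex⟩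
  · exact hlen.ne (congrArg List.length h)
  · exact List.lt_irrefl _ (h ▸ hlex)

theorem heapNode_injective : Function.Injective heapNode := by
  intro m n h
  by_contra hmn
  rcases Nat.lt_or_gt_of_ne hmn with hlt | hlt
  exacts [heapNode_ne_of_lt hlt h, heapNode_ne_of_lt hlt h.symm]

theorem le_of_heapNode_depthLex {m n : ℕ}
    (h : (heapNode m).length < (heapNode n).length ∨
      ((heapNode m).length = (heapNode n).length ∧ lexLe (heapNode m) (heapNode n))) : m ≤ n := by
  by_contra! hnm
  rcases heapNode_depthLex_of_lt hnm with hlen | ⟨hlen, hlex⟩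
  · rcases h with h | ⟨h, -⟩ <;> omega
  · rcases h with h | ⟨-, heq | hlex'⟩
    · omega
    · exact heapNode_ne_of_lt hnm heq.symm
    · exact List.lt_asymm hlex hlex'

section fusion

variable {T : Set (List Bool)} (hT : PerfectTree T)

noncomputable def fusion : ℕ → {s // splitNode T s}
  | 0 => ⟨_, (hT.exists_splitNode_extension hT.nil_mem 0).choose_spec.2.2⟩
  | n + 1 =>
    ⟨_, (hT.exists_splitNode_extension ((fusion n.div2).2.concat_mem n.bodd)
      ((fusion n).1.length + 1)).choose_spec.2.2⟩
decreasing_by all_goals (try rw [Nat.div2_val]); omega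

theorem fusion_div2_concat_prefix (n : ℕ) :
    (fusion hT n.div2).1 ++ [n.bodd] <+: (fusion hT (n + 1)).1 := by
  rw [fusion]
  exact (hT.exists_splitNode_extension ((fusion hT n.div2).2.concat_mem n.bodd) _).choose_spec.1

theorem fusion_length_lt_succ (n : ℕ) : (fusion hT n).1.length < (fusion hT (n + 1)).1.length := by
  conv_rhs => rw [fusion]
  exact (hT.exists_splitNode_extension ((fusion hT n.div2).2.concat_mem n.bodd) _).choose_spec.2.1

theorem fusion_length_strictMono : StrictMono fun n => (fusion hT n).1.length :=
  strictMono_nat_of_lt_succ (fusion_length_lt_succ hT)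

theorem fusion_concat_prefix_fusion_bit_succ (b : Bool) (n : ℕ) :
    (fusion hT n).1 ++ [b] <+: (fusion hT (Nat.bit b n + 1)).1 := by
  simpa only [Nat.div2_bit, Nat.bodd_bit] using fusion_div2_concat_prefix hT (Nat.bit b n)

theorem fusion_prefix_of_heapNode_prefix {m n : ℕ} (h : heapNode m <+: heapNode n) :
    (fusion hT m).1 <+: (fusion hT n).1 := by
  induction n using Nat.strong_induction_on generalizing m with
  | _ n ih =>
  obtain _ | k := n
  · rw [heapNode_zero, List.prefix_nil, ← heapNode_zero] at h
    rw [heapNode_injective h]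
  rw [heapNode_succ, List.prefix_concat_iff, ← heapNode_succ] at h
  rcases h with h | h
  · rw [heapNode_injective h]
  · exact (ih _ (by rw [Nat.div2_val]; omega) h).trans
      ((List.prefix_append _ _).trans (fusion_div2_concat_prefix hT k))

theorem fusion_concat_prefix_of_heapNode_concat_prefix {m n : ℕ} {b : Bool}
    (h : heapNode m ++ [b] <+: heapNode n) : (fusion hT m).1 ++ [b] <+: (fusion hT n).1 :=
  (fusion_concat_prefix_fusion_bit_succ hT b m).trans
    (fusion_prefix_of_heapNode_prefix hT (by rwa [heapNode_bit_succ]))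

theorem fusion_prefix_fusion_iff {m n : ℕ} :
    (fusion hT m).1 <+: (fusion hT n).1 ↔ heapNode m <+: heapNode n := by
  refine ⟨fun h => ?_, fusion_prefix_of_heapNode_prefix hT⟩
  by_contra hmn
  by_cases hnm : heapNode n <+: heapNode m
  · have heq := h.eq_of_length
      (h.length_le.antisymm (fusion_prefix_of_heapNode_prefix hT hnm).length_le)
    rw [(fusion_length_strictMono hT).injective (congrArg List.length heq)] at hmn
    exact hmn (List.prefix_refl _)
  · obtain ⟨w, x, y, hxy, hx, hy⟩ := List.exists_concat_prefix_of_not_prefix hmn hnm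
    obtain ⟨j, rfl⟩ := heapNode_surjective w
    exact hxy (List.eq_of_concat_prefix_of_concat_prefix
      ((fusion_concat_prefix_of_heapNode_concat_prefix hT hx).trans h)
      (fusion_concat_prefix_of_heapNode_concat_prefix hT hy))

def fusionTree : Set (List Bool) := {u | ∃ n, u <+: (fusion hT n).1}

theorem fusionTree_subset : fusionTree hT ⊆ T :=
  fun u ⟨n, hn⟩ => hT.2.1 u _ (fusion hT n).2.1 hn

theorem splitNode_fusionTree (n : ℕ) : splitNode (fusionTree hT) (fusion hT n).1 :=
  ⟨⟨n, List.prefix_refl _⟩, ⟨_, fusion_concat_prefix_fusion_bit_succ hT false n⟩,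
    ⟨_, fusion_concat_prefix_fusion_bit_succ hT true n⟩⟩

theorem perfectTree_fusionTree : PerfectTree (fusionTree hT) :=
  ⟨⟨[], 0, List.nil_prefix⟩, fun _ _ ⟨n, hn⟩ hst => ⟨n, hst.trans hn⟩,
    fun _ ⟨n, hn⟩ => ⟨_, hn, splitNode_fusionTree hT n⟩⟩

theorem exists_eq_fusion_of_splitNode {u : List Bool} (hu : splitNode (fusionTree hT) u) :
    ∃ n, u = (fusion hT n).1 := by
  obtain ⟨-, ⟨m, hm⟩, ⟨n, hn⟩⟩ := hu
  -- `fusion hT m` and `fusion hT n` branch off at `u`, and also at `fusion hT j`, where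
  -- `heapNode j` is the node at which `heapNode m` and `heapNode n` branch off.
  have hmn : ¬heapNode m <+: heapNode n := fun h => Bool.false_ne_true <|
    List.eq_of_concat_prefix_of_concat_prefix (hm.trans (fusion_prefix_of_heapNode_prefix hT h)) hn
  have hnm : ¬heapNode n <+: heapNode m := fun h => Bool.false_ne_true <|
    List.eq_of_concat_prefix_of_concat_prefix hm (hn.trans (fusion_prefix_of_heapNode_prefix hT h))
  obtain ⟨w, x, y, hxy, hx, hy⟩ := List.exists_concat_prefix_of_not_prefix hmn hnm
  obtain ⟨j, rfl⟩ := heapNode_surjective w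
  exact ⟨j, List.eq_of_branch_of_branch Bool.false_ne_true hxy hm hn
    (fusion_concat_prefix_of_heapNode_concat_prefix hT hx)
    (fusion_concat_prefix_of_heapNode_concat_prefix hT hy)⟩

theorem splitTrace_fusion (n : ℕ) : splitTrace (fusionTree hT) (fusion hT n).1 = heapNode n := by
  induction n using Nat.strong_induction_on with
  | _ n ih =>
  have below : ∀ u, u <+: (fusion hT n).1 → u ≠ (fusion hT n).1 → splitNode (fusionTree hT) u →
      ∃ m, u = (fusion hT m).1 ∧ heapNode m <+: heapNode n ∧ m ≠ n := by
    intro u hu hne hsplit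
    obtain ⟨m, rfl⟩ := exists_eq_fusion_of_splitNode hT hsplit
    exact ⟨m, rfl, (fusion_prefix_fusion_iff hT).mp hu, fun h => hne (h ▸ rfl)⟩
  obtain _ | k := n
  · rw [heapNode_zero, ← splitTrace_nil (T := fusionTree hT)]
    refine splitTrace_eq_of_prefix List.nil_prefix fun u _ hu hne hsplit => ?_
    obtain ⟨m, -, hm, hm0⟩ := below u hu hne hsplit
    rw [heapNode_zero, List.prefix_nil, ← heapNode_zero] at hm
    exact hm0 (heapNode_injective hm)
  have hparent := fusion_div2_concat_prefix hT k
  rw [splitTrace_eq_of_prefix hparent, splitTrace_concat, if_pos (splitNode_fusionTree hT _),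
    ih _ (by rw [Nat.div2_val]; omega), heapNode_succ]
  intro u hpu hu hne hsplit
  obtain ⟨m, rfl, hm, hmk⟩ := below u hu hne hsplit
  rw [heapNode_succ, List.prefix_concat_iff, ← heapNode_succ] at hm
  rcases hm with hm | hm
  · exact hmk (heapNode_injective hm)
  · have h₁ := (fusion_prefix_of_heapNode_prefix hT hm).length_le
    have h₂ := hpu.length_le
    simp only [List.length_append, List.length_singleton] at h₂
    omega

theorem goodTree_fusionTree : GoodTree (fusionTree hT) := by
  intro s t hs ht hst
  obtain ⟨m, rfl⟩ := exists_eq_fusion_of_splitNode hT hs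
  obtain ⟨n, rfl⟩ := exists_eq_fusion_of_splitNode hT ht
  rw [preceq, splitTrace_fusion, splitTrace_fusion] at hst
  exact (fusion_length_strictMono hT).monotone (le_of_heapNode_depthLex hst)

end fusion

/-- every perfect tree contains a good perfect subtree. -/
theorem exists_good_perfect_subtree (T : Set (List Bool)) (hT : PerfectTree T) :
    ∃ T' : Set (List Bool), T' ⊆ T ∧ PerfectTree T' ∧ GoodTree T' :=
  ⟨fusionTree hT, fusionTree_subset hT, perfectTree_fusionTree hT, goodTree_fusionTree hT⟩
end

section
/- If A is a maximal antichain in amoeba-Silver AV, (p,T) ∈ AV, and T* ⊆ T is such that (p,T*) ∈ AV and for every condition (q,S) ≤ (p,T*): if (q,S) belongs to the open dense set D_A = {(q,S) : ∃a ∈ A, (q,S) ≤ a} then also (q, T*↓q) ∈ D_A, then only countably many elements of A are compatible with (p,T*). -/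
/-- The height of a finite tree: the supremum of the lengths of its nodes. -/
noncomputable def ht (p : Set (List Bool)) : ℕ := sSup {n | ∃ t ∈ p, t.length = n}

/-- Conditions of amoeba-Silver `AV`: pairs `(p,T)` with `T` a Silver tree and
`p = T|n` for some `n`. -/
def memAV (c : Set (List Bool) × Set (List Bool)) : Prop :=
  SilverTree c.2 ∧ ∃ n : ℕ, c.1 = restrict c.2 n

/-- The order of `AV`: `(p',T') ≤ (p,T)` iff `T' ⊆ T` and `p'↾ht(p) = p`. -/
noncomputable def leAV (c d : Set (List Bool) × Set (List Bool)) : Prop :=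
  c.2 ⊆ d.2 ∧ restrict c.1 (ht d.1) = d.1

/-- `T↓q`: the nodes of `T` comparable with some terminal node of `q`. -/
def Tdown (T q : Set (List Bool)) : Set (List Bool) :=
  {t ∈ T | ∃ s ∈ Term q, comparable s t}

/-- Compatibility of `AV`-conditions. -/
noncomputable def compatAV (a b : Set (List Bool) × Set (List Bool)) : Prop :=
  ∃ c, memAV c ∧ leAV c a ∧ leAV c b

/-!
Every `a ∈ A` compatible with `(p, T*)` lies above a condition `(q, T*↓q)` with `q` finite,
and by the antichain property `a` is the only element of `A` above it. There are only countably
many finite `q`, hence only countably many such `a`.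
-/

lemma restrict_finite (S : Set (List Bool)) (n : ℕ) : (restrict S n).Finite :=
  (List.finite_length_le Bool n).subset fun _ ht => ht.2

lemma Set.Finite.exists_mem_Term_prefix {q : Set (List Bool)} (hq : q.Finite)
    {t : List Bool} (ht : t ∈ q) : ∃ s ∈ Term q, t <+: s := by
  obtain ⟨s, ⟨hsq, hts⟩, hmax⟩ := Set.Finite.exists_maximalFor List.length
    {u ∈ q | t <+: u} (hq.subset fun _ hu => hu.1) ⟨t, ht, List.prefix_refl t⟩
  refine ⟨s, ⟨hsq, fun u hu hsu => ?_⟩, hts⟩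
  exact hsu.eq_of_length (le_antisymm hsu.length_le (hmax ⟨hu, hts.trans hsu⟩ hsu.length_le))

lemma IsTree.take_mem_Term_restrict {S : Set (List Bool)} (hS : IsTree S) {t : List Bool}
    (ht : t ∈ S) {n : ℕ} (hn : n ≤ t.length) : t.take n ∈ Term (restrict S n) := by
  have hlen : (t.take n).length = n := List.length_take_of_le hn
  refine ⟨⟨hS _ _ ht (List.take_prefix n t), hlen.le⟩, fun u hu htu => ?_⟩
  exact htu.eq_of_length (le_antisymm htu.length_le (hu.2.trans_eq hlen.symm))

lemma IsTree.exists_mem_Term_restrict_comparable {S : Set (List Bool)} (hS : IsTree S)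
    {t : List Bool} (ht : t ∈ S) (n : ℕ) : ∃ s ∈ Term (restrict S n), comparable s t := by
  rcases le_or_gt t.length n with hle | hgt
  · obtain ⟨s, hs, hts⟩ := (restrict_finite S n).exists_mem_Term_prefix ⟨ht, hle⟩
    exact ⟨s, hs, Or.inr hts⟩
  · exact ⟨t.take n, hS.take_mem_Term_restrict ht hgt.le, Or.inl (List.take_prefix n t)⟩

lemma IsTree.subset_Tdown_restrict {S T : Set (List Bool)} (hS : IsTree S) (hST : S ⊆ T)
    (n : ℕ) : S ⊆ Tdown T (restrict S n) :=
  fun _ ht => ⟨hST ht, hS.exists_mem_Term_restrict_comparable ht n⟩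

lemma IsAntichain.subsingleton_setOf_leAV {A : Set (Set (List Bool) × Set (List Bool))}
    (hA : IsAntichain compatAV A) (c : Set (List Bool) × Set (List Bool)) :
    {a ∈ A | memAV c ∧ leAV c a}.Subsingleton := by
  rintro a ⟨ha, hc, hca⟩ b ⟨hb, -, hcb⟩
  by_contra hab
  exact hA ha hb hab ⟨c, hc, hca, hcb⟩

theorem av_countably_many_compatible_general
    (A : Set (Set (List Bool) × Set (List Bool)))
    (hanti : ∀ a ∈ A, ∀ b ∈ A, a ≠ b → ¬ compatAV a b)
    (p Tstar : Set (List Bool))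
    (hkey : ∀ q S : Set (List Bool), memAV (q, S) → leAV (q, S) (p, Tstar) →
      (∃ a ∈ A, leAV (q, S) a) →
      memAV (q, Tdown Tstar q) ∧ ∃ a ∈ A, leAV (q, Tdown Tstar q) a) :
    {a ∈ A | compatAV a (p, Tstar)}.Countable := by
  have hA : IsAntichain compatAV A := hanti
  have hcover : {a ∈ A | compatAV a (p, Tstar)} ⊆
      ⋃ q ∈ {q : Set (List Bool) | q.Finite},
        {a ∈ A | memAV (q, Tdown Tstar q) ∧ leAV (q, Tdown Tstar q) a} := by
    rintro a ⟨ha, ⟨q, S⟩, hqS, hqSa, hqSp⟩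
    obtain ⟨hS, n, rfl : q = restrict S n⟩ := hqS
    obtain ⟨hdown, a', ha', hdowna'⟩ := hkey _ S ⟨hS, n, rfl⟩ hqSp ⟨a, ha, hqSa⟩
    -- `S ⊆ T*↓q`, so the condition `(q, S)` lies below both `a` and `a'`.
    have hSdown : S ⊆ Tdown Tstar (restrict S n) := hS.1.2.1.subset_Tdown_restrict hqSp.1 n
    have ha'a : a' = a := hA.subsingleton_setOf_leAV _
      ⟨ha', ⟨hS, n, rfl⟩, hSdown.trans hdowna'.1, hdowna'.2⟩ ⟨ha, ⟨hS, n, rfl⟩, hqSa⟩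
    subst ha'a
    exact Set.mem_biUnion (restrict_finite S n) ⟨ha', hdown, hdowna'⟩
  exact (Set.Countable.ofPred_finite.biUnion fun q _ =>
    (hA.subsingleton_setOf_leAV _).countable).mono hcover

/-- if `A` is a maximal antichain of `AV`, `(p,T) ∈ AV`, and
`T* ⊆ T` with `(p,T*) ∈ AV` is such that every `(q,S) ≤ (p,T*)` lying in the
open dense set `D_A` associated with `A` satisfies `(q,T*↓q) ∈ D_A`, then only
countably many elements of `A` are compatible with `(p,T*)`. -/
theorem av_countably_many_compatible
    (A : Set (Set (List Bool) × Set (List Bool)))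
    (hA : ∀ a ∈ A, memAV a)
    (hanti : ∀ a ∈ A, ∀ b ∈ A, a ≠ b → ¬ compatAV a b)
    (hmax : ∀ c, memAV c → ∃ a ∈ A, compatAV c a)
    (p T Tstar : Set (List Bool))
    (hpT : memAV (p, T)) (hpTs : memAV (p, Tstar)) (hsub : Tstar ⊆ T)
    (hkey : ∀ q S : Set (List Bool), memAV (q, S) → leAV (q, S) (p, Tstar) →
      (∃ a ∈ A, leAV (q, S) a) →
      memAV (q, Tdown Tstar q) ∧ ∃ a ∈ A, leAV (q, Tdown Tstar q) a) :
    {a ∈ A | compatAV a (p, Tstar)}.Countable :=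
  av_countably_many_compatible_general A hanti p Tstar hkey
end
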